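/- The group HΓ₀(2) = {[[A,B],[C,D]] ∈ GL₄(ℤ[ω]) : g*Jg = J, C ≡ 0 mod 2} surjects onto GL₂(𝔽₄) via [[A,B],[C,D]] ↦ A mod 2, with kernel HΓ₁(2) = {g ∈ HΓ₀(2) : A ≡ I₂ mod 2}. -/

import Mathlib

open Complex Matrix

/-- A primitive cube root of unity. -/
noncomputable def ω : ℂ := Complex.exp (2 * Real.pi * Complex.I / 3)

/-- `z` is an Eisenstein integer, i.e. `z ∈ ℤ[ω]`. -/
def IsEis (z : ℂ) : Prop := ∃ a b : ℤ, z = (a : ℂ) + (b : ℂ) * ω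

/-- A matrix has Eisenstein integer entries. -/
def EisM {n m : ℕ} (A : Matrix (Fin n) (Fin m) ℂ) : Prop := ∀ i j, IsEis (A i j)

/-- Entrywise congruence mod `2` in `ℤ[ω]`. -/
def MEq2 {n m : ℕ} (A B : Matrix (Fin n) (Fin m) ℂ) : Prop :=
  ∀ i j, ∃ c : ℂ, IsEis c ∧ A i j - B i j = 2 * c

/-- The symplectic-hermitian form `J = [[0,I₂],[-I₂,0]]`. -/
def J4 : Matrix (Fin 4) (Fin 4) ℂ :=
  !![0,0,1,0; 0,0,0,1; -1,0,0,0; 0,-1,0,0]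

/-- The upper-left 2×2 block `A` of `g = [[A,B],[C,D]]`. -/
def Ablk (g : Matrix (Fin 4) (Fin 4) ℂ) : Matrix (Fin 2) (Fin 2) ℂ :=
  g.submatrix (Fin.castAdd 2) (Fin.castAdd 2)

/-- The lower-left 2×2 block `C` of `g = [[A,B],[C,D]]`. -/
def Cblk (g : Matrix (Fin 4) (Fin 4) ℂ) : Matrix (Fin 2) (Fin 2) ℂ :=
  g.submatrix (Fin.natAdd 2) (Fin.castAdd 2)

/-- Membership in `HΓ₀(2)`: Eisenstein entries, `g*Jg = J`, and `C ≡ 0 mod 2`. -/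
def InHG0 (g : Matrix (Fin 4) (Fin 4) ℂ) : Prop :=
  EisM g ∧ gᴴ * J4 * g = J4 ∧ MEq2 (Cblk g) 0

/-- Membership in `HΓ₁(2)`: additionally `A ≡ I₂ mod 2`. -/
def InHG1 (g : Matrix (Fin 4) (Fin 4) ℂ) : Prop :=
  InHG0 g ∧ MEq2 (Ablk g) 1

/-!
Reduction modulo 2 maps `ℤ[ω]` onto the field `𝔽₄`, and every nonzero residue is the class of
one of the units `1`, `ω`, `1 + ω = -ω²`. Since `GL₂` of a field is generated by transvections
and invertible diagonal matrices, all of which lift to `ℤ[ω]`, every `A` whose reduction is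
invertible is congruent to some `M ∈ GL₂(ℤ[ω])`, and `diag(M, (M⁻¹)*)` lies in `HΓ₀(2)`.
Multiplicativity of `A mod 2` is the block formula `A_{gh} = A_g A_h + B_g C_h` with `C_h ≡ 0`.
-/

lemma omega_isPrimitiveRoot : IsPrimitiveRoot ω 3 := by
  simpa [ω] using Complex.isPrimitiveRoot_exp 3 (by norm_num)

lemma omega_sq_add_omega_add_one : ω ^ 2 + ω + 1 = 0 := by
  have := omega_isPrimitiveRoot.geom_sum_eq_zero (by norm_num)
  simp only [Finset.sum_range_succ, Finset.sum_range_zero] at this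
  linear_combination this

lemma omega_im_pos : 0 < ω.im := by
  rw [ω, Complex.exp_im]
  have : (2 * Real.pi * Complex.I / 3).im = 2 * Real.pi / 3 := by simp
  rw [this]
  exact mul_pos (Real.exp_pos _)
    (Real.sin_pos_of_pos_of_lt_pi (by positivity) (by linarith [Real.pi_pos]))

lemma star_omega : (starRingEnd ℂ) ω = -1 - ω := by
  rw [← Complex.inv_eq_conj (omega_isPrimitiveRoot.norm'_eq_one (by norm_num)),
    inv_eq_of_mul_eq_one_right]
  linear_combination -omega_sq_add_omega_add_one

def eisensteinIntegers : Subring ℂ where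
  carrier := {z | IsEis z}
  mul_mem' := by
    rintro _ _ ⟨a, b, rfl⟩ ⟨c, d, rfl⟩
    exact ⟨a * c - b * d, a * d + b * c - b * d, by
      push_cast; linear_combination (b * d : ℂ) * omega_sq_add_omega_add_one⟩
  one_mem' := ⟨1, 0, by simp⟩
  add_mem' := by
    rintro _ _ ⟨a, b, rfl⟩ ⟨c, d, rfl⟩
    exact ⟨a + c, b + d, by push_cast; ring⟩
  zero_mem' := ⟨0, 0, by simp⟩
  neg_mem' := by
    rintro _ ⟨a, b, rfl⟩
    exact ⟨-a, -b, by push_cast; ring⟩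

local notation "ℤ[ω]" => eisensteinIntegers

lemma mem_eisensteinIntegers {z : ℂ} : z ∈ ℤ[ω] ↔ IsEis z := Iff.rfl

lemma IsEis.star {z : ℂ} (hz : IsEis z) : IsEis (starRingEnd ℂ z) := by
  obtain ⟨a, b, rfl⟩ := hz
  exact ⟨a - b, -b, by simp only [map_add, map_mul, map_intCast, star_omega]; push_cast; ring⟩

lemma eq_zero_of_intCast_add_intCast_mul_omega_eq_zero {a b : ℤ} (h : (a : ℂ) + b * ω = 0) :
    a = 0 ∧ b = 0 := by
  have hb : b = 0 := by
    have him := congrArg Complex.im h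
    simp only [Complex.add_im, Complex.intCast_im, Complex.mul_im, Complex.intCast_re, zero_mul,
      add_zero, zero_add, Complex.zero_im] at him
    exact_mod_cast (mul_eq_zero.1 him).resolve_right omega_im_pos.ne'
  subst hb
  exact ⟨by simpa using h, rfl⟩

noncomputable def omegaUnit : ℤ[ω]ˣ where
  val := ⟨ω, 0, 1, by simp⟩
  inv := ⟨-1 - ω, -1, -1, by push_cast; ring⟩
  val_inv := Subtype.ext <| show ω * (-1 - ω) = 1 by
    linear_combination -omega_sq_add_omega_add_one
  inv_val := Subtype.ext <| show (-1 - ω) * ω = 1 by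
    linear_combination -omega_sq_add_omega_add_one

local notation "𝔭₂" => Ideal.span {(2 : ℤ[ω])}

lemma mem_span_two_iff {x : ℤ[ω]} : x ∈ 𝔭₂ ↔ ∃ c, IsEis c ∧ (x : ℂ) = 2 * c := by
  rw [Ideal.mem_span_singleton]
  constructor
  · rintro ⟨c, rfl⟩
    exact ⟨c, c.2, rfl⟩
  · rintro ⟨c, hc, hx⟩
    exact ⟨⟨c, hc⟩, Subtype.ext hx⟩

lemma one_notMem_span_two : (1 : ℤ[ω]) ∉ 𝔭₂ := by
  rintro h
  obtain ⟨_, ⟨a, b, rfl⟩, h⟩ := mem_span_two_iff.1 h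
  have := eq_zero_of_intCast_add_intCast_mul_omega_eq_zero (a := 1 - 2 * a) (b := -2 * b)
    (by push_cast at h ⊢; linear_combination h)
  omega

lemma exists_unit_sub_mem_span_two {x : ℤ[ω]} (hx : x ∉ 𝔭₂) : ∃ u : ℤ[ω]ˣ, x - u ∈ 𝔭₂ := by
  obtain ⟨a, b, hab⟩ := x.2
  simp only [mem_span_two_iff] at hx ⊢
  obtain ⟨k, rfl | rfl⟩ := Int.even_or_odd' a <;> obtain ⟨l, rfl | rfl⟩ := Int.even_or_odd' b
  · exact absurd ⟨k + l * ω, ⟨k, l, rfl⟩, by push_cast [hab]; ring⟩ hx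
  · exact ⟨omegaUnit, k + l * ω, ⟨k, l, rfl⟩, by push_cast [hab, omegaUnit]; ring⟩
  · exact ⟨1, k + l * ω, ⟨k, l, rfl⟩, by push_cast [hab]; ring⟩
  · refine ⟨-omegaUnit ^ 2, k + l * ω, ⟨k, l, rfl⟩, ?_⟩
    push_cast [hab, omegaUnit]; linear_combination omega_sq_add_omega_add_one

lemma exists_unit_mk_eq {q : ℤ[ω] ⧸ 𝔭₂} (hq : q ≠ 0) :
    ∃ u : ℤ[ω]ˣ, Ideal.Quotient.mk 𝔭₂ u = q := by
  obtain ⟨x, rfl⟩ := Ideal.Quotient.mk_surjective q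
  obtain ⟨u, hu⟩ := exists_unit_sub_mem_span_two (mt Ideal.Quotient.eq_zero_iff_mem.2 hq)
  exact ⟨u, (Ideal.Quotient.eq.2 hu).symm⟩

instance : (𝔭₂).IsMaximal := by
  refine Ideal.Quotient.maximal_of_isField _
    ⟨⟨0, 1, fun h => one_notMem_span_two (Ideal.Quotient.eq_zero_iff_mem.1 h.symm)⟩, mul_comm,
      fun hq => ?_⟩
  obtain ⟨u, rfl⟩ := exists_unit_mk_eq hq
  exact ⟨Ideal.Quotient.mk _ ↑u⁻¹, by rw [← map_mul, Units.mul_inv, map_one]⟩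

noncomputable instance : Field (ℤ[ω] ⧸ 𝔭₂) := Ideal.Quotient.field _

theorem Matrix.exists_isUnit_det_map_eq {R K n : Type*} [CommRing R] [Field K] [Fintype n]
    [DecidableEq n] (f : R →+* K) (hf : ∀ x : K, x ≠ 0 → ∃ u : Rˣ, f u = x)
    {N : Matrix n n K} (hN : N.det ≠ 0) : ∃ M : Matrix n n R, IsUnit M.det ∧ M.map f = N := by
  refine diagonal_transvection_induction_of_det_ne_zero
    (fun N => ∃ M : Matrix n n R, IsUnit M.det ∧ M.map f = N) N hN (fun D hD => ?_) (fun t => ?_)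
    (fun A B _ _ ⟨MA, hMA, hA⟩ ⟨MB, hMB, hB⟩ => ⟨MA * MB, ?_, ?_⟩)
  · rw [det_diagonal] at hD
    choose u hu using fun i => hf (D i) (Finset.prod_ne_zero_iff.1 hD i (Finset.mem_univ i))
    refine ⟨diagonal fun i => (u i : R), ?_, ?_⟩
    · simp [det_diagonal, ← Units.coe_prod]
    · rw [diagonal_map (map_zero f)]
      exact congrArg diagonal (funext hu)
  · obtain ⟨c, hc⟩ : ∃ c, f c = t.c := by
      rcases eq_or_ne t.c 0 with h | h
      · exact ⟨0, by rw [h, map_zero]⟩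
      · obtain ⟨u, hu⟩ := hf _ h; exact ⟨u, hu⟩
    refine ⟨(⟨t.i, t.j, t.hij, c⟩ : TransvectionStruct n R).toMatrix,
      by rw [TransvectionStruct.det]; exact isUnit_one, ?_⟩
    ext a b
    simp [TransvectionStruct.toMatrix, transvection, one_apply, single_apply, apply_ite f, hc]
  · rw [det_mul]; exact hMA.mul hMB
  · rw [Matrix.map_mul, hA, hB]

theorem Matrix.submatrix_mul_finAdd {α ι κ ι' κ' : Type*} [NonUnitalNonAssocSemiring α] {m n : ℕ}
    (g : Matrix ι (Fin (m + n)) α) (h : Matrix (Fin (m + n)) κ α) (r : ι' → ι) (c : κ' → κ) :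
    (g * h).submatrix r c = g.submatrix r (Fin.castAdd n) * h.submatrix (Fin.castAdd n) c +
      g.submatrix r (Fin.natAdd m) * h.submatrix (Fin.natAdd m) c := by
  ext i j
  simp [mul_apply, Fin.sum_univ_add]

theorem Matrix.map_submatrix_mul_of_map_lowerLeft_eq_zero {R Q : Type*} [NonAssocSemiring R]
    [NonAssocSemiring Q] (f : R →+* Q) {m n : ℕ} {g h : Matrix (Fin (m + n)) (Fin (m + n)) R}
    (hg : (g.submatrix (Fin.natAdd m) (Fin.castAdd n)).map f = 0)
    (hh : (h.submatrix (Fin.natAdd m) (Fin.castAdd n)).map f = 0) :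
    ((g * h).submatrix (Fin.natAdd m) (Fin.castAdd n)).map f = 0 ∧
      ((g * h).submatrix (Fin.castAdd n) (Fin.castAdd n)).map f =
        (g.submatrix (Fin.castAdd n) (Fin.castAdd n)).map f *
          (h.submatrix (Fin.castAdd n) (Fin.castAdd n)).map f := by
  simp only [submatrix_mul_finAdd, Matrix.map_add _ (map_add f), Matrix.map_mul, hg, hh,
    Matrix.zero_mul, Matrix.mul_zero, add_zero, and_self]

lemma EisM.exists_eq_map {n m : ℕ} {A : Matrix (Fin n) (Fin m) ℂ} (hA : EisM A) :
    ∃ A' : Matrix (Fin n) (Fin m) ℤ[ω], A = A'.map ℤ[ω].subtype :=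
  ⟨.of fun i j => ⟨A i j, hA i j⟩, rfl⟩

lemma eisM_map {n m : ℕ} (A : Matrix (Fin n) (Fin m) ℤ[ω]) : EisM (A.map ℤ[ω].subtype) :=
  fun i j => (A i j).2

lemma meq2_map_iff {n m : ℕ} {X Y : Matrix (Fin n) (Fin m) ℤ[ω]} :
    MEq2 (X.map ℤ[ω].subtype) (Y.map ℤ[ω].subtype) ↔
      X.map (Ideal.Quotient.mk 𝔭₂) = Y.map (Ideal.Quotient.mk 𝔭₂) := by
  simp only [MEq2, ← Matrix.ext_iff, map_apply, Ideal.Quotient.eq, mem_span_two_iff]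
  rfl

lemma meq2_map_zero_iff {n m : ℕ} {X : Matrix (Fin n) (Fin m) ℤ[ω]} :
    MEq2 (X.map ℤ[ω].subtype) 0 ↔ X.map (Ideal.Quotient.mk 𝔭₂) = 0 := by
  simpa using meq2_map_iff (Y := 0)

lemma meq2_map_one_iff {n : ℕ} {X : Matrix (Fin n) (Fin n) ℤ[ω]} :
    MEq2 (X.map ℤ[ω].subtype) 1 ↔ X.map (Ideal.Quotient.mk 𝔭₂) = 1 := by
  simpa using meq2_map_iff (X := X) (Y := 1)

lemma ablk_map (G : Matrix (Fin 4) (Fin 4) ℤ[ω]) :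
    Ablk (G.map ℤ[ω].subtype) = (G.submatrix (Fin.castAdd 2) (Fin.castAdd 2)).map ℤ[ω].subtype :=
  rfl

lemma InHG0.mul {g h : Matrix (Fin 4) (Fin 4) ℂ} (hg : InHG0 g) (hh : InHG0 h) :
    InHG0 (g * h) ∧ MEq2 (Ablk (g * h)) (Ablk g * Ablk h) := by
  obtain ⟨hgE, hgJ, hgC⟩ := hg
  obtain ⟨hhE, hhJ, hhC⟩ := hh
  have hJ : (g * h)ᴴ * J4 * (g * h) = J4 :=
    calc (g * h)ᴴ * J4 * (g * h) = hᴴ * (gᴴ * J4 * g) * h := by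
          simp only [conjTranspose_mul, Matrix.mul_assoc]
      _ = J4 := by rw [hgJ, hhJ]
  obtain ⟨G, rfl⟩ := hgE.exists_eq_map
  obtain ⟨H, rfl⟩ := hhE.exists_eq_map
  obtain ⟨hC, hA⟩ := map_submatrix_mul_of_map_lowerLeft_eq_zero (Ideal.Quotient.mk 𝔭₂)
    (meq2_map_zero_iff.1 hgC) (meq2_map_zero_iff.1 hhC)
  rw [← Matrix.map_mul] at hJ ⊢
  refine ⟨⟨eisM_map _, hJ, meq2_map_zero_iff.2 hC⟩, ?_⟩
  rw [ablk_map, ablk_map, ablk_map, ← Matrix.map_mul, meq2_map_iff, hA, Matrix.map_mul]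

local notation "e₂₂" => (finSumFinEquiv : Fin 2 ⊕ Fin 2 ≃ Fin (2 + 2))

lemma J4_eq_reindex :
    J4 = reindex e₂₂ e₂₂ (fromBlocks 0 1 (-1) 0 : Matrix (Fin 2 ⊕ Fin 2) _ ℂ) := by
  ext i j
  obtain ⟨i, rfl⟩ := (e₂₂).surjective i
  obtain ⟨j, rfl⟩ := (e₂₂).surjective j
  rcases i with i | i <;> rcases j with j | j <;> fin_cases i <;> fin_cases j <;> simp [J4] <;> rfl

lemma ablk_reindex (X : Matrix (Fin 2 ⊕ Fin 2) (Fin 2 ⊕ Fin 2) ℂ) :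
    Ablk (reindex e₂₂ e₂₂ X) = X.toBlocks₁₁ := by
  ext i j
  simp only [Ablk, toBlocks₁₁, reindex_apply, submatrix_apply, finSumFinEquiv_symm_apply_castAdd,
    of_apply]

lemma cblk_reindex (X : Matrix (Fin 2 ⊕ Fin 2) (Fin 2 ⊕ Fin 2) ℂ) :
    Cblk (reindex e₂₂ e₂₂ X) = X.toBlocks₂₁ := by
  ext i j
  simp only [Cblk, toBlocks₂₁, reindex_apply, submatrix_apply, finSumFinEquiv_symm_apply_castAdd,
    finSumFinEquiv_symm_apply_natAdd, of_apply]

lemma fromBlocks_conjTranspose_mul_J_mul {α n : Type*} [CommRing α] [StarRing α] [Fintype n]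
    [DecidableEq n] {m m' : Matrix n n α} (h : m' * m = 1) :
    (fromBlocks m 0 0 m'ᴴ)ᴴ * fromBlocks 0 1 (-1) 0 * fromBlocks m 0 0 m'ᴴ =
      fromBlocks 0 1 (-1) 0 := by
  simp [fromBlocks_conjTranspose, fromBlocks_multiply, ← conjTranspose_mul, h]

lemma inHG0_reindex_fromBlocks {m m' : Matrix (Fin 2) (Fin 2) ℂ} (hm : EisM m) (hm' : EisM m')
    (h : m' * m = 1) :
    InHG0 (reindex e₂₂ e₂₂ (fromBlocks m 0 0 m'ᴴ)) := by
  refine ⟨fun i j => ?_, ?_, ?_⟩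
  · simp only [reindex_apply, submatrix_apply]
    rcases (e₂₂).symm i with a | a <;> rcases (e₂₂).symm j with b | b <;>
      simp [hm _ _, (hm' _ _).star, mem_eisensteinIntegers.1 (zero_mem ℤ[ω])]
  · rw [J4_eq_reindex, conjTranspose_reindex]
    simp only [reindex_apply]
    rw [submatrix_mul_equiv, submatrix_mul_equiv, fromBlocks_conjTranspose_mul_J_mul h]
  · rw [cblk_reindex, toBlocks_fromBlocks₂₁]
    exact fun _ _ => ⟨0, mem_eisensteinIntegers.1 (zero_mem ℤ[ω]), by simp⟩

lemma exists_inHG0_ablk_meq2 {A : Matrix (Fin 2) (Fin 2) ℂ} (hA : EisM A)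
    (hAB : ∃ B, EisM B ∧ MEq2 (A * B) 1) : ∃ g, InHG0 g ∧ MEq2 (Ablk g) A := by
  obtain ⟨B, hB, hAB⟩ := hAB
  obtain ⟨A, rfl⟩ := hA.exists_eq_map
  obtain ⟨B, rfl⟩ := hB.exists_eq_map
  have hred : A.map (Ideal.Quotient.mk 𝔭₂) * B.map (Ideal.Quotient.mk 𝔭₂) = 1 := by
    rw [← Matrix.map_mul]
    exact meq2_map_one_iff.1 (by rwa [Matrix.map_mul])
  have hdet : (A.map (Ideal.Quotient.mk 𝔭₂)).det ≠ 0 :=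
    left_ne_zero_of_mul_eq_one (by rw [← det_mul, hred, det_one])
  obtain ⟨M, hM, hMA⟩ := exists_isUnit_det_map_eq _ (fun _ => exists_unit_mk_eq) hdet
  refine ⟨_, inHG0_reindex_fromBlocks (eisM_map M) (eisM_map M⁻¹) ?_, ?_⟩
  · rw [← Matrix.map_mul, nonsing_inv_mul _ hM, Matrix.map_one _ (map_zero _) (map_one _)]
  · rw [ablk_reindex, toBlocks_fromBlocks₁₁, meq2_map_iff, hMA]

/-- The map `g ↦ A mod 2` is a homomorphism from `HΓ₀(2)` onto
`GL₂(ℤ[ω]/2) ≅ GL₂(𝔽₄)`, with kernel `HΓ₁(2)`. -/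
theorem stmt18 :
    (∀ g h : Matrix (Fin 4) (Fin 4) ℂ, InHG0 g → InHG0 h →
      InHG0 (g * h) ∧ MEq2 (Ablk (g * h)) (Ablk g * Ablk h)) ∧
    (∀ A : Matrix (Fin 2) (Fin 2) ℂ, EisM A →
      (∃ B : Matrix (Fin 2) (Fin 2) ℂ, EisM B ∧ MEq2 (A * B) 1) →
      ∃ g : Matrix (Fin 4) (Fin 4) ℂ, InHG0 g ∧ MEq2 (Ablk g) A) ∧
    (∀ g : Matrix (Fin 4) (Fin 4) ℂ, InHG0 g → (MEq2 (Ablk g) 1 ↔ InHG1 g)) :=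
  ⟨fun _ _ => InHG0.mul, fun _ => exists_inHG0_ablk_meq2,
    fun _ hg => ⟨fun hA => ⟨hg, hA⟩, And.right⟩⟩
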